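/- Let x ∈ ℝ^K have nonnegative coordinates with x_i > 0, and for t > 0 define (using real powers) g(t) = φ_i(x)·(1 − 1/(t·Σ_{k∈V_i} x_k))^{t·x_i − 1}·∏_{j∈V_i∖{i}} (1 − 1/(t·Σ_{k∈V_j} x_k))^{t·x_j} (note that Σ_{k∈V_j} x_k ≥ x_i > 0 for every j ∈ V_i, so g(t) is well defined for t large). Then g(t) → φ_i(x)·exp(−Σ_{j∈V_i} φ_j(x)) as t → ∞. -/

import Mathlib

/-!
Write `S_j = ∑_{k ∈ V_j} x_k`, which is positive for `j ∈ V_i` because `i ∈ V_j`. Each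
factor `(1 - 1/(t S_j))^{t x_j}` is `((1 - 1/u)^u)^{x_j / S_j}` with `u = t S_j → ∞`, so it
tends to `exp(-x_j / S_j) = exp(-φ_j(x))`; the extra exponent `-1` on the `i`-th factor is
harmless since its base tends to `1`. Multiplying the finitely many limits gives the claim.
-/

open Finset

/-- The closed neighbourhood `V_i = {i} ∪ {j : (i,j) ∈ E}` of a vertex `i`. -/
def closedNbhd {K : ℕ} (G : SimpleGraph (Fin K)) [DecidableRel G.Adj] (i : Fin K) :
    Finset (Fin K) :=
  insert i (G.neighborFinset i)

/-- `φ_i(x) = x_i / ∑_{j ∈ V_i} x_j`. -/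
noncomputable def phi {K : ℕ} (G : SimpleGraph (Fin K)) [DecidableRel G.Adj]
    (x : Fin K → ℝ) (i : Fin K) : ℝ :=
  x i / ∑ j ∈ closedNbhd G i, x j

open Filter Real Topology

lemma tendsto_one_sub_inv_mul_rpow_mul {S : ℝ} (a : ℝ) (hS : 0 < S) :
    Tendsto (fun t : ℝ => (1 - 1 / (t * S)) ^ (t * a)) atTop (𝓝 (exp (-(a / S)))) := by
  have hu : Tendsto (fun t : ℝ => t * S) atTop atTop := tendsto_id.atTop_mul_const hS
  have hbase : Tendsto (fun t : ℝ => (1 - 1 / (t * S)) ^ (t * S)) atTop (𝓝 (exp (-1))) := by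
    simpa [Function.comp_def, sub_eq_add_neg, neg_div] using
      (tendsto_one_add_div_rpow_exp (-1)).comp hu
  have hlim := hbase.rpow_const (p := a / S) (Or.inl (exp_pos _).ne')
  rw [← exp_mul, neg_one_mul] at hlim
  refine hlim.congr' ?_
  filter_upwards [hu.eventually_ge_atTop 1] with t ht
  have hbase_nonneg : 0 ≤ 1 - 1 / (t * S) := by
    rw [sub_nonneg, div_le_one (by linarith)]
    exact ht
  rw [← rpow_mul hbase_nonneg]
  field_simp

lemma tendsto_one_sub_inv_mul_rpow_mul_add {S : ℝ} (a b : ℝ) (hS : 0 < S) :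
    Tendsto (fun t : ℝ => (1 - 1 / (t * S)) ^ (t * a + b)) atTop (𝓝 (exp (-(a / S)))) := by
  have hu : Tendsto (fun t : ℝ => t * S) atTop atTop := tendsto_id.atTop_mul_const hS
  have hbase : Tendsto (fun t : ℝ => 1 - 1 / (t * S)) atTop (𝓝 1) := by
    simpa [one_div] using tendsto_const_nhds.sub (tendsto_inv_atTop_zero.comp hu)
  have hshift : Tendsto (fun t : ℝ => (1 - 1 / (t * S)) ^ b) atTop (𝓝 1) := by
    simpa using hbase.rpow_const (p := b) (Or.inl one_ne_zero)
  have hlim := (tendsto_one_sub_inv_mul_rpow_mul a hS).mul hshift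
  rw [mul_one] at hlim
  refine hlim.congr' ?_
  filter_upwards [hu.eventually_gt_atTop 1] with t ht
  have hbase_pos : 0 < 1 - 1 / (t * S) := by
    rw [sub_pos, div_lt_one (by linarith)]
    exact ht
  rw [rpow_add hbase_pos]

section ClosedNeighbourhood

variable {K : ℕ} (G : SimpleGraph (Fin K)) [DecidableRel G.Adj]

lemma mem_closedNbhd_self (i : Fin K) : i ∈ closedNbhd G i :=
  mem_insert_self _ _

lemma mem_closedNbhd_comm {i j : Fin K} : j ∈ closedNbhd G i ↔ i ∈ closedNbhd G j := by
  simp only [closedNbhd, mem_insert, SimpleGraph.mem_neighborFinset, G.adj_comm i j, eq_comm]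

lemma sum_closedNbhd_pos {x : Fin K → ℝ} (hnn : ∀ k, 0 ≤ x k) {i j : Fin K} (hxi : 0 < x i)
    (hj : j ∈ closedNbhd G i) : 0 < ∑ k ∈ closedNbhd G j, x k :=
  hxi.trans_le <| single_le_sum (fun k _ => hnn k) ((mem_closedNbhd_comm G).mp hj)

lemma exp_neg_sum_phi_closedNbhd (x : Fin K → ℝ) (i : Fin K) :
    exp (-∑ j ∈ closedNbhd G i, phi G x j) =
      exp (-phi G x i) * ∏ j ∈ (closedNbhd G i).erase i, exp (-phi G x j) := by
  rw [← sum_neg_distrib, exp_sum,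
    mul_prod_erase _ (fun j => exp (-phi G x j)) (mem_closedNbhd_self G i)]

end ClosedNeighbourhood

/-- For `x` with nonnegative coordinates and `x_i > 0`, the function (using real powers)
`g(t) = φ_i(x)(1 − 1/(t∑_{k∈V_i} x_k))^{t x_i − 1} ∏_{j∈V_i∖{i}} (1 − 1/(t∑_{k∈V_j} x_k))^{t x_j}`
tends to `φ_i(x) exp(−∑_{j∈V_i} φ_j(x))` as `t → ∞`. -/
theorem stmt18 {K : ℕ} (G : SimpleGraph (Fin K)) [DecidableRel G.Adj]
    (x : Fin K → ℝ) (hnn : ∀ k, 0 ≤ x k) (i : Fin K) (hxi : 0 < x i) :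
    Filter.Tendsto
      (fun t : ℝ =>
        phi G x i * (1 - 1 / (t * ∑ k ∈ closedNbhd G i, x k)) ^ (t * x i - 1) *
          ∏ j ∈ (closedNbhd G i).erase i,
            (1 - 1 / (t * ∑ k ∈ closedNbhd G j, x k)) ^ (t * x j))
      Filter.atTop
      (nhds (phi G x i * Real.exp (-∑ j ∈ closedNbhd G i, phi G x j))) := by
  have hS : ∀ j ∈ closedNbhd G i, 0 < ∑ k ∈ closedNbhd G j, x k :=
    fun j hj => sum_closedNbhd_pos G hnn hxi hj
  have hself := tendsto_one_sub_inv_mul_rpow_mul_add (x i) (-1) (hS i (mem_closedNbhd_self G i))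
  have hothers := tendsto_finsetProd ((closedNbhd G i).erase i) fun j hj =>
    tendsto_one_sub_inv_mul_rpow_mul (x j) (hS j (mem_of_mem_erase hj))
  rw [exp_neg_sum_phi_closedNbhd, ← mul_assoc]
  simpa only [sub_eq_add_neg, phi] using (tendsto_const_nhds.mul hself).mul hothers
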